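/- Let φ_n(t) = exp((n-2)√t/(n+√t)) for integers n ≥ 2 and φ_0(t) = φ_1(t) = 1, for t ≥ 0. Then for all integers n ≥ j ≥ 2 with n ≥ 3 and all t ≥ 0, φ_j(t) ≤ φ_n(t)^{(j-2)/(n-2)} · (j/n)^{-(j-2)/4}. -/

import Mathlib

/-!
Taking logarithms, and writing `s = √t`, the claim reduces to
`(j - 2) (s / (j + s) - s / (n + s)) ≤ (j - 2) (log n - log j) / 4`.
This follows from the monotonicity of `u ↦ log u / 4 + s / (u + s)` on `(0, ∞)`, whose derivative
`1 / (4u) - s / (u + s)²` is nonnegative because `(u + s)² ≥ 4us`.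
-/

noncomputable def phi (n : ℕ) (t : ℝ) : ℝ :=
  if n ≤ 1 then 1 else Real.exp (((n : ℝ) - 2) * Real.sqrt t / ((n : ℝ) + Real.sqrt t))

open Real Set

theorem monotoneOn_log_div_four_add_div_add {s : ℝ} (hs : 0 ≤ s) :
    MonotoneOn (fun u => log u / 4 + s / (u + s)) (Ioi 0) := by
  have hderiv : ∀ u ∈ Ioi (0 : ℝ),
      HasDerivAt (fun u => log u / 4 + s / (u + s)) (u⁻¹ / 4 - s / (u + s) ^ 2) u := by
    intro u (hu : 0 < u)
    refine (((hasDerivAt_log hu.ne').div_const 4).add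
      ((hasDerivAt_const u s).div ((hasDerivAt_id' u).add_const s) (by positivity))).congr_deriv ?_
    ring
  refine monotoneOn_of_hasDerivWithinAt_nonneg (convex_Ioi 0)
    (fun u hu => (hderiv u hu).continuousAt.continuousWithinAt)
    (fun u hu => (hderiv u (interior_subset hu)).hasDerivWithinAt) fun u hu => ?_
  rw [interior_Ioi] at hu
  have hu : 0 < u := hu
  rw [sub_nonneg, div_le_div_iff₀ (by positivity) (by norm_num), inv_mul_eq_div, le_div_iff₀ hu]
  nlinarith [sq_nonneg (u - s)]

theorem phi_of_two_le {n : ℕ} (hn : 2 ≤ n) (t : ℝ) :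
    phi n t = exp (((n : ℝ) - 2) * (√t / ((n : ℝ) + √t))) := by
  rw [phi, if_neg (by omega), mul_div_assoc]

theorem phi_le (n j : ℕ) (t : ℝ) (hj : 2 ≤ j) (hjn : j ≤ n) (hn : 3 ≤ n) :
    phi j t ≤ phi n t ^ (((j : ℝ) - 2) / ((n : ℝ) - 2)) *
      ((j : ℝ) / (n : ℝ)) ^ (-(((j : ℝ) - 2) / 4)) := by
  have hj2 : (0 : ℝ) ≤ j - 2 := sub_nonneg.2 (by exact_mod_cast hj)
  have hn2 : (n : ℝ) - 2 ≠ 0 := by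
    have : (3 : ℝ) ≤ n := by exact_mod_cast hn
    linarith
  have hj0 : (0 : ℝ) < j := by positivity
  have hn0 : (0 : ℝ) < n := by positivity
  have key := monotoneOn_log_div_four_add_div_add (sqrt_nonneg t) hj0 hn0 (by exact_mod_cast hjn)
  rw [phi_of_two_le hj, phi_of_two_le (hj.trans hjn), ← exp_mul, rpow_def_of_pos (by positivity),
    ← exp_add, exp_le_exp, log_div hj0.ne' hn0.ne', mul_right_comm, mul_div_cancel₀ _ hn2]
  linarith [mul_le_mul_of_nonneg_left key hj2]
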